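/- Under the contraction hypotheses (metric M with m·I ⪯ M ⪯ m̄·I, rate 0 ≤ α < 1) and disturbance hypotheses (per-step disturbance bounded by (K+1)η + ε), the tracking error satisfies ‖x_k - x^d_k‖ ≤ α^k √(m̄/m) ‖x_0 - x^d_0‖ + (((K+1)η + ε)/(1-α)) √(m̄/m) (1 - α^k), and hence the steady-state error satisfies limsup_{k→∞} ‖x_k - x^d_k‖ ≤ √(m̄/m) ((K+1)η + ε)/(1-α). -/

import Mathlib

open Matrix

/-- Euclidean (2-)norm of a vector in `ℝⁿ`. -/
noncomputable def euclidNorm {n : ℕ} (v : Fin n → ℝ) : ℝ := Real.sqrt (v ⬝ᵥ v)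

lemma euclidNorm_eq_norm {n : ℕ} (v : Fin n → ℝ) :
    euclidNorm v = ‖(WithLp.equiv 2 (Fin n → ℝ)).symm v‖ := by
  rw [EuclideanSpace.norm_eq]
  unfold euclidNorm
  congr 1
  rw [dotProduct]
  refine Finset.sum_congr rfl fun i _ => ?_
  rw [WithLp.equiv_symm_apply, WithLp.ofLp_toLp, Real.norm_eq_abs, sq_abs, sq]

lemma euclidNorm_add_le {n : ℕ} (a b : Fin n → ℝ) : euclidNorm (a + b) ≤ euclidNorm a + euclidNorm b := by
  rw [euclidNorm_eq_norm, euclidNorm_eq_norm, euclidNorm_eq_norm]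
  exact norm_add_le _ _

lemma psd_dot {n : ℕ} {A : Matrix (Fin n) (Fin n) ℝ} (h : A.PosSemidef) (v : Fin n → ℝ) :
    0 ≤ v ⬝ᵥ A.mulVec v := by have := h.dotProduct_mulVec_nonneg v; simpa using this

lemma psd_sqrt_form_triangle {n : ℕ} {A : Matrix (Fin n) (Fin n) ℝ} (h : A.PosSemidef)
    (a b : Fin n → ℝ) :
    Real.sqrt ((a + b) ⬝ᵥ A.mulVec (a + b))
      ≤ Real.sqrt (a ⬝ᵥ A.mulVec a) + Real.sqrt (b ⬝ᵥ A.mulVec b) := by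
  obtain ⟨B, rfl⟩ : ∃ B : Matrix (Fin n) (Fin n) ℝ, A = Bᴴ * B := by
    open scoped MatrixOrder Matrix.Norms.L2Operator in
    obtain ⟨B, hB⟩ := CStarAlgebra.nonneg_iff_eq_star_mul_self.mp h.nonneg
    exact ⟨B, hB⟩
  have key : ∀ v : Fin n → ℝ, v ⬝ᵥ (Bᴴ * B).mulVec v = (B.mulVec v) ⬝ᵥ (B.mulVec v) := by
    intro v
    rw [← Matrix.mulVec_mulVec, Matrix.dotProduct_mulVec]
    congr 1
    rw [show Bᴴ = Bᵀ from rfl, Matrix.vecMul_transpose]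
  rw [key, key, key]
  rw [Matrix.mulVec_add B a b]
  exact euclidNorm_add_le _ _

lemma dot_self_nonneg {n : ℕ} (v : Fin n → ℝ) : 0 ≤ v ⬝ᵥ v :=
  Finset.sum_nonneg fun i _ => mul_self_nonneg _

/-- Theorem 5, steady-state tracking error of MPT: the closed loop
contracts to the desired trajectory `x^d` with metric `M(k)` (`m·I ⪯ M(k) ⪯ m̄·I`)
and rate `α ∈ [0,1)`, under an effective disturbance `σ` with
`‖σ(k)‖ ≤ (K+1)η + ε`. Then the tracking error satisfies
`‖x_k - x^d_k‖ ≤ α^k √(m̄/m) ‖x_0 - x^d_0‖ + (((K+1)η+ε)/(1-α)) √(m̄/m) (1-α^k)`,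
and `limsup_k ‖x_k - x^d_k‖ ≤ √(m̄/m) ((K+1)η + ε)/(1-α)`. -/
theorem mpt_steady_state_tracking_error {n : ℕ}
    (x xd : ℕ → (Fin n → ℝ)) (σ : ℕ → (Fin n → ℝ))
    (M : ℕ → Matrix (Fin n) (Fin n) ℝ)
    (hMsym : ∀ k, (M k).IsHermitian)
    (m mbar : ℝ) (hm : 0 < m) (hmm : m ≤ mbar)
    (hMlb : ∀ k, (M k - m • (1 : Matrix (Fin n) (Fin n) ℝ)).PosSemidef)
    (hMub : ∀ k, (mbar • (1 : Matrix (Fin n) (Fin n) ℝ) - M k).PosSemidef)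
    (α : ℝ) (hα0 : 0 ≤ α) (hα1 : α < 1)
    (hcontr : ∀ k,
      (x (k + 1) - xd (k + 1) - σ k) ⬝ᵥ (M (k + 1)).mulVec (x (k + 1) - xd (k + 1) - σ k)
        ≤ α ^ 2 * ((x k - xd k) ⬝ᵥ (M k).mulVec (x k - xd k)))
    (K : ℕ) (η ε : ℝ) (hη : 0 ≤ η) (hε : 0 ≤ ε)
    (hσ : ∀ k, euclidNorm (σ k) ≤ ((K : ℝ) + 1) * η + ε) :
    (∀ k, euclidNorm (x k - xd k)
      ≤ α ^ k * Real.sqrt (mbar / m) * euclidNorm (x 0 - xd 0)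
        + ((((K : ℝ) + 1) * η + ε) / (1 - α)) * Real.sqrt (mbar / m) * (1 - α ^ k)) ∧
    Filter.limsup (fun k => euclidNorm (x k - xd k)) Filter.atTop
      ≤ Real.sqrt (mbar / m) * (((K : ℝ) + 1) * η + ε) / (1 - α) := by
  set e : ℕ → (Fin n → ℝ) := fun k => x k - xd k with he
  set d : ℝ := ((K : ℝ) + 1) * η + ε with hd
  have hd0 : 0 ≤ d := by positivity
  have h1α : (0:ℝ) < 1 - α := by linarith
  have hmbar0 : (0:ℝ) < mbar := lt_of_lt_of_le hm hmm
  -- quadratic form bounds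
  have hlb : ∀ k (v : Fin n → ℝ), m * (v ⬝ᵥ v) ≤ v ⬝ᵥ (M k).mulVec v := by
    intro k v
    have h := psd_dot (hMlb k) v
    rw [Matrix.sub_mulVec, Matrix.smul_mulVec, Matrix.one_mulVec,
      dotProduct_sub, dotProduct_smul, smul_eq_mul] at h
    linarith
  have hub : ∀ k (v : Fin n → ℝ), v ⬝ᵥ (M k).mulVec v ≤ mbar * (v ⬝ᵥ v) := by
    intro k v
    have h := psd_dot (hMub k) v
    rw [Matrix.sub_mulVec, Matrix.smul_mulVec, Matrix.one_mulVec,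
      dotProduct_sub, dotProduct_smul, smul_eq_mul] at h
    linarith
  have hMpsd : ∀ k, (M k).PosSemidef := by
    intro k
    refine .of_dotProduct_mulVec_nonneg (hMsym k) fun v => ?_
    have := le_trans (mul_nonneg hm.le (dot_self_nonneg v)) (hlb k v)
    simpa using this
  -- Lyapunov sequence
  set W : ℕ → ℝ := fun k => Real.sqrt (e k ⬝ᵥ (M k).mulVec (e k)) with hW
  have hWnn : ∀ k, 0 ≤ W k := fun k => Real.sqrt_nonneg _
  set c : ℝ := Real.sqrt mbar * d with hc
  have hc0 : 0 ≤ c := mul_nonneg (Real.sqrt_nonneg _) hd0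
  -- one-step recursion
  have key : ∀ k, W (k + 1) ≤ α * W k + c := by
    intro k
    have hsplit : e (k + 1) = (e (k + 1) - σ k) + σ k := by abel
    have htri : W (k + 1)
        ≤ Real.sqrt ((e (k+1) - σ k) ⬝ᵥ (M (k+1)).mulVec (e (k+1) - σ k))
          + Real.sqrt (σ k ⬝ᵥ (M (k+1)).mulVec (σ k)) := by
      calc W (k + 1)
          = Real.sqrt (((e (k+1) - σ k) + σ k) ⬝ᵥ (M (k+1)).mulVec ((e (k+1) - σ k) + σ k)) := by
            rw [hW]; rw [← hsplit]
        _ ≤ _ := psd_sqrt_form_triangle (hMpsd (k+1)) _ _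
    have h1 : Real.sqrt ((e (k+1) - σ k) ⬝ᵥ (M (k+1)).mulVec (e (k+1) - σ k)) ≤ α * W k := by
      have := Real.sqrt_le_sqrt (hcontr k)
      calc Real.sqrt ((e (k+1) - σ k) ⬝ᵥ (M (k+1)).mulVec (e (k+1) - σ k))
          ≤ Real.sqrt (α ^ 2 * (e k ⬝ᵥ (M k).mulVec (e k))) := this
        _ = α * W k := by
            rw [Real.sqrt_mul (sq_nonneg α), Real.sqrt_sq hα0]
    have h2 : Real.sqrt (σ k ⬝ᵥ (M (k+1)).mulVec (σ k)) ≤ c := by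
      calc Real.sqrt (σ k ⬝ᵥ (M (k+1)).mulVec (σ k))
          ≤ Real.sqrt (mbar * (σ k ⬝ᵥ σ k)) := Real.sqrt_le_sqrt (hub (k+1) (σ k))
        _ = Real.sqrt mbar * euclidNorm (σ k) := by
            rw [Real.sqrt_mul hmbar0.le]; rfl
        _ ≤ Real.sqrt mbar * d := by
            exact mul_le_mul_of_nonneg_left (hσ k) (Real.sqrt_nonneg _)
    linarith
  -- induction
  have hWk : ∀ k, W k ≤ α ^ k * W 0 + c * (1 - α ^ k) / (1 - α) := by
    intro k
    induction k with
    | zero => simp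
    | succ k ih =>
        have step := key k
        have : α * W k ≤ α * (α ^ k * W 0 + c * (1 - α ^ k) / (1 - α)) :=
          mul_le_mul_of_nonneg_left ih hα0
        have heq : α * (α ^ k * W 0 + c * (1 - α ^ k) / (1 - α)) + c
            = α ^ (k+1) * W 0 + c * (1 - α ^ (k+1)) / (1 - α) := by
          field_simp
          ring
        linarith
  -- per-step bound on euclidNorm
  have hαk1 : ∀ k, α ^ k ≤ 1 := fun k => pow_le_one₀ hα0 hα1.le
  have hsm : (0:ℝ) < Real.sqrt m := Real.sqrt_pos.mpr hm
  have hlow : ∀ k, Real.sqrt m * euclidNorm (e k) ≤ W k := by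
    intro k
    calc Real.sqrt m * euclidNorm (e k) = Real.sqrt (m * (e k ⬝ᵥ e k)) := by
          rw [Real.sqrt_mul hm.le]; rfl
      _ ≤ W k := Real.sqrt_le_sqrt (hlb k (e k))
  have hhigh : W 0 ≤ Real.sqrt mbar * euclidNorm (e 0) := by
    calc W 0 ≤ Real.sqrt (mbar * (e 0 ⬝ᵥ e 0)) := Real.sqrt_le_sqrt (hub 0 (e 0))
      _ = Real.sqrt mbar * euclidNorm (e 0) := by rw [Real.sqrt_mul hmbar0.le]; rfl
  have part1 : ∀ k, euclidNorm (e k)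
      ≤ α ^ k * Real.sqrt (mbar / m) * euclidNorm (e 0)
        + (d / (1 - α)) * Real.sqrt (mbar / m) * (1 - α ^ k) := by
    intro k
    have h1 : euclidNorm (e k) ≤ W k / Real.sqrt m := by
      rw [le_div_iff₀ hsm]
      calc euclidNorm (e k) * Real.sqrt m = Real.sqrt m * euclidNorm (e k) := mul_comm _ _
        _ ≤ W k := hlow k
    have h2 : W k ≤ α ^ k * (Real.sqrt mbar * euclidNorm (e 0)) + c * (1 - α ^ k) / (1 - α) := by
      have := hWk k
      have h3 : α ^ k * W 0 ≤ α ^ k * (Real.sqrt mbar * euclidNorm (e 0)) :=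
        mul_le_mul_of_nonneg_left hhigh (pow_nonneg hα0 k)
      linarith
    have hrhs : α ^ k * Real.sqrt (mbar / m) * euclidNorm (e 0)
        + (d / (1 - α)) * Real.sqrt (mbar / m) * (1 - α ^ k)
        = (α ^ k * (Real.sqrt mbar * euclidNorm (e 0)) + c * (1 - α ^ k) / (1 - α)) / Real.sqrt m := by
      rw [Real.sqrt_div hmbar0.le, hc]
      field_simp
    rw [hrhs]
    calc euclidNorm (e k) ≤ W k / Real.sqrt m := h1
      _ ≤ _ := by gcongr
  refine ⟨part1, ?_⟩
  -- limsup part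
  set C1 : ℝ := Real.sqrt (mbar / m) * euclidNorm (e 0) with hC1
  set L : ℝ := (d / (1 - α)) * Real.sqrt (mbar / m) with hL
  set g : ℕ → ℝ := fun k => α ^ k * C1 + L * (1 - α ^ k) with hg
  have hpow : Filter.Tendsto (fun k : ℕ => α ^ k) Filter.atTop (nhds 0) :=
    tendsto_pow_atTop_nhds_zero_of_lt_one hα0 hα1
  have hgt : Filter.Tendsto g Filter.atTop (nhds (0 * C1 + L * (1 - 0))) := by
    exact (hpow.mul_const C1).add ((tendsto_const_nhds.sub hpow).const_mul L)
  have hgt' : Filter.Tendsto g Filter.atTop (nhds L) := by simpa using hgt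
  have hle : (fun k => euclidNorm (e k)) ≤ᶠ[Filter.atTop] g := by
    refine Filter.Eventually.of_forall fun k => ?_
    have := part1 k
    simpa [hg, hC1, hL, mul_comm, mul_left_comm, mul_assoc] using this
  have hcb : Filter.IsCoboundedUnder (· ≤ ·) Filter.atTop (fun k => euclidNorm (e k)) := by
    apply Filter.IsBoundedUnder.isCoboundedUnder_le
    refine ⟨0, ?_⟩
    rw [Filter.eventually_map]
    exact Filter.Eventually.of_forall fun k => Real.sqrt_nonneg _
  have hbd : Filter.IsBoundedUnder (· ≤ ·) Filter.atTop g := hgt'.isBoundedUnder_le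
  have hlim : Filter.limsup (fun k => euclidNorm (e k)) Filter.atTop ≤ L :=
    le_of_le_of_eq (Filter.limsup_le_limsup hle hcb hbd) (hgt'.limsup_eq)
  calc Filter.limsup (fun k => euclidNorm (x k - xd k)) Filter.atTop ≤ L := hlim
    _ = Real.sqrt (mbar / m) * d / (1 - α) := by rw [hL]; ring
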